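/- Fix γ > 0, κ ≥ 0, β > 0 and t ∈ ℝ. For each α > 0 with β·(α+γ) < 4, let p*(α) denote the unique fixed point in [0,1] of the logit map with parameters (α, γ, κ, β, t). Then p* is strictly decreasing in α: if 0 < α₁ < α₂ and β·(α₂+γ) < 4, then p*(α₁) > p*(α₂). -/

import Mathlib

/-!
The logit map is the sigmoid of an affine function of `p` with slope `β(α+γ)`; since the sigmoid
is `1/4`-Lipschitz, `p ↦ L(p)` is a weak contraction as soon as `β(α+γ) ≤ 4`. Raising `α` strictly
lowers `L(p)` for every `p < 1`, so the fixed point `p₂` at `α₂` satisfies `p₂ < L_{α₁}(p₂)`. If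
`p₁ ≤ p₂` this gives `L_{α₁}(p₂) - L_{α₁}(p₁) > p₂ - p₁ ≥ 0`, contradicting the contraction bound.
-/

/-- The logit map with status-quo bias: `L_t(p) = 1/(1 + exp(β(α − κ − p(α+γ) + t)))`. -/
noncomputable def logitMap (α γ κ β t p : ℝ) : ℝ :=
  1 / (1 + Real.exp (β * (α - κ - p * (α + γ) + t)))

open Real

lemma Real.sigmoid_mul_one_sub_le (x : ℝ) : sigmoid x * (1 - sigmoid x) ≤ 1 / 4 := by
  nlinarith [sq_nonneg (2 * sigmoid x - 1)]

lemma Real.lipschitzWith_sigmoid : LipschitzWith (1 / 4) sigmoid := by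
  refine lipschitzWith_of_nnnorm_deriv_le differentiable_sigmoid fun x => ?_
  have hnonneg : 0 ≤ sigmoid x * (1 - sigmoid x) :=
    mul_nonneg (sigmoid_nonneg x) (sub_nonneg.2 (sigmoid_le_one x))
  rw [← NNReal.coe_le_coe, coe_nnnorm, deriv_sigmoid, Real.norm_of_nonneg hnonneg]
  simpa using sigmoid_mul_one_sub_le x

section logitMap

variable (α γ κ β t : ℝ)

lemma logitMap_eq_sigmoid (p : ℝ) :
    logitMap α γ κ β t p = sigmoid (-(β * (α - κ - p * (α + γ) + t))) := by
  rw [logitMap, sigmoid_def, neg_neg, one_div]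

lemma logitMap_lt_one (p : ℝ) : logitMap α γ κ β t p < 1 := by
  rw [logitMap_eq_sigmoid]
  exact sigmoid_lt_one _

lemma abs_logitMap_sub_le (p q : ℝ) :
    |logitMap α γ κ β t p - logitMap α γ κ β t q| ≤ |β * (α + γ)| / 4 * |p - q| := by
  have h := lipschitzWith_sigmoid.dist_le_mul
    (-(β * (α - κ - p * (α + γ) + t))) (-(β * (α - κ - q * (α + γ) + t)))
  rw [← logitMap_eq_sigmoid, ← logitMap_eq_sigmoid, Real.dist_eq, Real.dist_eq] at h
  calc |logitMap α γ κ β t p - logitMap α γ κ β t q|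
      ≤ 1 / 4 * |-(β * (α - κ - p * (α + γ) + t)) - -(β * (α - κ - q * (α + γ) + t))| := by
        exact_mod_cast h
    _ = |β * (α + γ)| / 4 * |p - q| := by
        rw [show -(β * (α - κ - p * (α + γ) + t)) - -(β * (α - κ - q * (α + γ) + t))
            = β * (α + γ) * (p - q) by ring, abs_mul]
        ring

variable {α β} in
lemma strictAnti_logitMap_param (hβ : 0 < β) {p : ℝ} (hp : p < 1) :
    StrictAnti fun α => logitMap α γ κ β t p := by
  intro α₁ α₂ hα
  simp only [logitMap_eq_sigmoid]
  refine sigmoid_lt ?_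
  have : 0 < β * ((α₂ - α₁) * (1 - p)) :=
    mul_pos hβ (mul_pos (sub_pos.2 hα) (sub_pos.2 hp))
  linarith

end logitMap

theorem stmt_4_general (γ κ β t : ℝ) (hγ : 0 < γ) (hβ : 0 < β)
    (α₁ α₂ p₁ p₂ : ℝ) (hα₁ : 0 < α₁) (hα : α₁ < α₂)
    (hcontr : β * (α₂ + γ) < 4)
    (hfix₁ : logitMap α₁ γ κ β t p₁ = p₁)
    (hfix₂ : logitMap α₂ γ κ β t p₂ = p₂) :
    p₂ < p₁ := by
  have hp₂_lt_one : p₂ < 1 := hfix₂ ▸ logitMap_lt_one α₂ γ κ β t p₂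
  have hshift : p₂ < logitMap α₁ γ κ β t p₂ :=
    hfix₂.symm.trans_lt (strictAnti_logitMap_param γ κ t hβ hp₂_lt_one hα)
  have hslope : |β * (α₁ + γ)| / 4 ≤ 1 := by
    rw [abs_of_pos (by positivity)]
    nlinarith
  by_contra! h
  have hcontract := abs_logitMap_sub_le α₁ γ κ β t p₂ p₁
  rw [hfix₁, abs_of_nonneg (sub_nonneg.2 h)] at hcontract
  have := mul_le_of_le_one_left (sub_nonneg.2 h) hslope
  linarith [le_abs_self (logitMap α₁ γ κ β t p₂ - p₁)]

/-- Under the contraction condition, the QRE-SB equilibrium probability `p*(α)`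
(the unique fixed point of the logit map in `[0,1]`) is strictly decreasing in `α`:
if `0 < α₁ < α₂` and `β(α₂+γ) < 4`, then `p*(α₁) > p*(α₂)`. -/
theorem stmt_4 (γ κ β t : ℝ) (hγ : 0 < γ) (hκ : 0 ≤ κ) (hβ : 0 < β)
    (α₁ α₂ p₁ p₂ : ℝ) (hα₁ : 0 < α₁) (hα : α₁ < α₂)
    (hcontr : β * (α₂ + γ) < 4)
    (hp₁ : p₁ ∈ Set.Icc (0 : ℝ) 1) (hfix₁ : logitMap α₁ γ κ β t p₁ = p₁)
    (hp₂ : p₂ ∈ Set.Icc (0 : ℝ) 1) (hfix₂ : logitMap α₂ γ κ β t p₂ = p₂) :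
    p₂ < p₁ :=
  stmt_4_general γ κ β t hγ hβ α₁ α₂ p₁ p₂ hα₁ hα hcontr hfix₁ hfix₂
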